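/- In the avg-EQ reduction instance built from a simple graph H = (V, E) and an integer k ≥ 4 with |V| + |E| ≥ k², under avg-EQ utilities, the following holds: if a coalition C blocks the coalition structure Γ and the vertex player v' belongs to C for some v ∈ V, then the number of edges e ∈ E incident to v whose edge player e' belongs to C is at least k−1. -/

import Mathlib

open Finset
open scoped Classical

section AHGDefs

variable {N : Type*} [Fintype N] [DecidableEq N]

/-- The set of friends of player `i` inside coalition `C`. -/
noncomputable def friendsIn (G : SimpleGraph N) (C : Finset N) (i : N) : Finset N :=
  C.filter fun j => G.Adj i j

/-- The friend-oriented valuation of coalition `C` by player `i`: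
`val_i(C) = n·|F_i ∩ C| − |E_i ∩ C|`. -/
noncomputable def fval (G : SimpleGraph N) (C : Finset N) (i : N) : ℤ :=
  (Fintype.card N : ℤ) * ((friendsIn G C i).card : ℤ)
    - ((C.filter fun j => ¬ G.Adj i j ∧ j ≠ i).card : ℤ)

/-- Average-based equal-treatment utility. -/
noncomputable def utilAvgEQ (G : SimpleGraph N) (C : Finset N) (i : N) : ℚ :=
  (∑ c ∈ insert i (friendsIn G C i), (fval G C c : ℚ)) /
    ((insert i (friendsIn G C i)).card : ℚ)

/-- Average-based altruistic-treatment utility with weight `w`. -/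
noncomputable def utilAvgAL (G : SimpleGraph N) (w : ℚ) (C : Finset N) (i : N) : ℚ :=
  (fval G C i : ℚ) +
    w * (if (friendsIn G C i).Nonempty then
          (∑ c ∈ friendsIn G C i, (fval G C c : ℚ)) / ((friendsIn G C i).card : ℚ)
         else 0)

/-- Min-based equal-treatment utility. -/
noncomputable def utilMinEQ (G : SimpleGraph N) (C : Finset N) (i : N) : ℤ :=
  (insert i (friendsIn G C i)).inf' (insert_nonempty _ _) (fval G C)

/-- Min-based altruistic-treatment utility with weight `w`. -/
noncomputable def utilMinAL (G : SimpleGraph N) (w : ℤ) (C : Finset N) (i : N) : ℤ :=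
  fval G C i +
    w * (if h : (friendsIn G C i).Nonempty then (friendsIn G C i).inf' h (fval G C) else 0)

/-- A coalition structure (partition of the players), given as the map sending
each player to its coalition. -/
structure CoalitionStructure (N : Type*) [Fintype N] [DecidableEq N] where
  part : N → Finset N
  mem_part : ∀ i, i ∈ part i
  part_eq : ∀ i j, j ∈ part i → part j = part i

/-- A (nonempty) coalition `C` blocks the coalition structure `Γ`. -/
def Blocks {α : Type*} [LT α] (util : Finset N → N → α) (Γ : CoalitionStructure N)
    (C : Finset N) : Prop :=
  C.Nonempty ∧ ∀ i ∈ C, util (Γ.part i) i < util C i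

/-- Core stability: no nonempty coalition blocks `Γ`. -/
def CoreStable {α : Type*} [LT α] (util : Finset N → N → α)
    (Γ : CoalitionStructure N) : Prop :=
  ¬ ∃ C : Finset N, Blocks util Γ C

/-- The base clique of a `(d,k')`-dome gadget on `P` with top player `top`
and mid players `mid`. -/
noncomputable def domeBase {d : ℕ} (P : Finset N) (top : N) (mid : Fin d → N) : Finset N :=
  P \ insert top (Finset.univ.image mid)

/-- `P` carries a `(d,k')`-dome gadget of the graph `G`, with top player `top`,
mid players `mid i` and fringe players `fringe i`. -/
structure IsDomeGadget (G : SimpleGraph N) (d k' : ℕ) (P : Finset N) (top : N)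
    (mid fringe : Fin d → N) : Prop where
  card_eq : P.card = k'
  top_mem : top ∈ P
  mid_mem : ∀ i, mid i ∈ P
  mid_inj : Function.Injective mid
  mid_ne_top : ∀ i, mid i ≠ top
  fringe_mem : ∀ i, fringe i ∈ domeBase P top mid
  fringe_inj : Function.Injective fringe
  adj_iff : ∀ x ∈ P, ∀ y ∈ P, (G.Adj x y ↔
    ((x = top ∧ ∃ i, y = mid i) ∨ (y = top ∧ ∃ i, x = mid i) ∨
     (x ∈ domeBase P top mid ∧ y ∈ domeBase P top mid ∧ x ≠ y) ∨
     (∃ i, (x = mid i ∧ y = fringe i) ∨ (y = mid i ∧ x = fringe i))))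

/-- `P` carries a `(d,k')`-dome gadget with top player `top` (mid and fringe
players existentially quantified). -/
def HasDomeGadget (G : SimpleGraph N) (d k' : ℕ) (P : Finset N) (top : N) : Prop :=
  ∃ mid fringe : Fin d → N, IsDomeGadget G d k' P top mid fringe

/-- The gadget size `k' = k + 3·(k choose 2) + 1` of the average-based reductions. -/
def avgK' (k : ℕ) : ℕ := k + 3 * Nat.choose k 2 + 1

variable {V : Type*} [Fintype V] [DecidableEq V]

/-- `Γ` is the coalition structure of the average-based reduction instances: its
coalitions are exactly the gadget player sets. -/
def IsAvgGamma (H : SimpleGraph V) (Pv : V → Finset N) (Pe : Sym2 V → Finset N)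
    (Pve : V → Sym2 V → Finset N) (Γ : CoalitionStructure N) : Prop :=
  (∀ v : V, ∀ i ∈ Pv v, Γ.part i = Pv v) ∧
  (∀ e ∈ H.edgeSet, ∀ i ∈ Pe e, Γ.part i = Pe e) ∧
  (∀ (v : V), ∀ e ∈ H.edgeSet, v ∈ e → ∀ i ∈ Pve v e, Γ.part i = Pve v e)

/-- The avg-EQ reduction instance built from the graph `H` and `k ≥ 4`:
`G` is the constructed network of friends; `Pv v` carries a `(k−1,k')`-dome gadget
with top player `vp v`, `Pe e` a `(2,k')`-dome gadget with top player `ep e`, and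
`Pve v e` a `(2,k')`-dome gadget with top player `bp v e`. Each `bp v e` is further
adjacent to `vp v` and `ep e`, and there are no other edges. -/
structure AvgEQReduction (H : SimpleGraph V) (k : ℕ) (G : SimpleGraph N)
    (Pv : V → Finset N) (Pe : Sym2 V → Finset N) (Pve : V → Sym2 V → Finset N)
    (vp : V → N) (ep : Sym2 V → N) (bp : V → Sym2 V → N) : Prop where
  dome_v : ∀ v : V, HasDomeGadget G (k - 1) (avgK' k) (Pv v) (vp v)
  dome_e : ∀ e ∈ H.edgeSet, HasDomeGadget G 2 (avgK' k) (Pe e) (ep e)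
  dome_ve : ∀ (v : V), ∀ e ∈ H.edgeSet, v ∈ e →
    HasDomeGadget G 2 (avgK' k) (Pve v e) (bp v e)
  disj_vv : ∀ v w : V, v ≠ w → Disjoint (Pv v) (Pv w)
  disj_ee : ∀ e ∈ H.edgeSet, ∀ f ∈ H.edgeSet, e ≠ f → Disjoint (Pe e) (Pe f)
  disj_bb : ∀ (v : V), ∀ e ∈ H.edgeSet, v ∈ e → ∀ (w : V), ∀ f ∈ H.edgeSet, w ∈ f →
    (v, e) ≠ (w, f) → Disjoint (Pve v e) (Pve w f)
  disj_v_e : ∀ (v : V), ∀ e ∈ H.edgeSet, Disjoint (Pv v) (Pe e)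
  disj_v_b : ∀ (v w : V), ∀ f ∈ H.edgeSet, w ∈ f → Disjoint (Pv v) (Pve w f)
  disj_e_b : ∀ e ∈ H.edgeSet, ∀ (w : V), ∀ f ∈ H.edgeSet, w ∈ f →
    Disjoint (Pe e) (Pve w f)
  cover : ∀ x : N, (∃ v : V, x ∈ Pv v) ∨ (∃ e ∈ H.edgeSet, x ∈ Pe e) ∨
    (∃ (v : V), ∃ e ∈ H.edgeSet, v ∈ e ∧ x ∈ Pve v e)
  adj_bv : ∀ (v : V), ∀ e ∈ H.edgeSet, v ∈ e → G.Adj (bp v e) (vp v)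
  adj_be : ∀ (v : V), ∀ e ∈ H.edgeSet, v ∈ e → G.Adj (bp v e) (ep e)
  adj_cases : ∀ x y : N, G.Adj x y →
    (∃ v : V, x ∈ Pv v ∧ y ∈ Pv v) ∨
    (∃ e ∈ H.edgeSet, x ∈ Pe e ∧ y ∈ Pe e) ∨
    (∃ (v : V), ∃ e ∈ H.edgeSet, v ∈ e ∧ x ∈ Pve v e ∧ y ∈ Pve v e) ∨
    (∃ (v : V), ∃ e ∈ H.edgeSet, v ∈ e ∧
      ((x = bp v e ∧ y = vp v) ∨ (y = bp v e ∧ x = vp v))) ∨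
    (∃ (v : V), ∃ e ∈ H.edgeSet, v ∈ e ∧
      ((x = bp v e ∧ y = ep e) ∨ (y = bp v e ∧ x = ep e)))
end AHGDefs

/-!
For `i ∈ C` one has `val_i(C) = (n + 1)·|F_i ∩ C| − (|C| − 1)`, so the avg-EQ utility of `i` is
`n + 1` times the average, over `i` and its friends in `C`, of their numbers of friends in `C`,
minus `|C| − 1`. As `n + 1` exceeds every gadget size, a blocking coalition cannot lower this
average by much. Inside a dome gadget this excludes, in turn, the non-fringe base players, the
fringe players, and the mid players whose top has few friends in `C`. So if `v' ∈ C`, its friends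
in `C` are mid players with at most one friend in `C` and incidence players `b_{v,e}` with at most
two, and two only when `e' ∈ C`. With fewer than `k − 1` such edges the average drops from
`3(k − 1)/k` in `P_v` by at least `1/k²`, which costs `v'` more than the coalition size can repay.
-/

open scoped BigOperators

section Utility

variable {N : Type*} {G : SimpleGraph N} {C : Finset N} {i j : N}

lemma mem_friendsIn : j ∈ friendsIn G C i ↔ j ∈ C ∧ G.Adj i j := mem_filter

lemma self_notMem_friendsIn : i ∉ friendsIn G C i :=
  fun h => G.irrefl (mem_friendsIn.1 h).2

variable [DecidableEq N]

noncomputable def avgFriendDeg (G : SimpleGraph N) (C : Finset N) (i : N) : ℚ :=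
  𝔼 c ∈ insert i (friendsIn G C i), (#(friendsIn G C c) : ℚ)

lemma avgFriendDeg_le {M : ℚ}
    (h : ∀ c ∈ insert i (friendsIn G C i), (#(friendsIn G C c) : ℚ) ≤ M) :
    avgFriendDeg G C i ≤ M :=
  expect_le (insert_nonempty _ _) h

lemma le_avgFriendDeg {L : ℚ}
    (h : L * #(insert i (friendsIn G C i))
      ≤ ∑ c ∈ insert i (friendsIn G C i), (#(friendsIn G C c) : ℚ)) :
    L ≤ avgFriendDeg G C i := by
  have hpos : (0 : ℚ) < #(insert i (friendsIn G C i)) := by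
    exact_mod_cast (insert_nonempty i (friendsIn G C i)).card_pos
  rwa [avgFriendDeg, expect_eq_sum_div_card, le_div_iff₀ hpos]

lemma avgFriendDeg_eq : avgFriendDeg G C i
    = (#(friendsIn G C i) + ∑ c ∈ friendsIn G C i, (#(friendsIn G C c) : ℚ))
      / (#(friendsIn G C i) + 1) := by
  rw [avgFriendDeg, expect_eq_sum_div_card, sum_insert self_notMem_friendsIn,
    card_insert_of_notMem self_notMem_friendsIn]
  push_cast
  rfl

variable [Fintype N]

lemma fval_eq (hi : i ∈ C) :
    fval G C i = (Fintype.card N + 1) * #(friendsIn G C i) - (#C - 1) := by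
  have hsplit := card_filter_add_card_filter_not (s := C) (fun j => G.Adj i j)
  have hnonadj : C.filter (fun j => ¬ G.Adj i j)
      = insert i (C.filter fun j => ¬ G.Adj i j ∧ j ≠ i) := by
    ext j
    by_cases hji : j = i
    · subst hji
      simp [hi]
    · simp [hji]
  rw [hnonadj, card_insert_of_notMem (by simp)] at hsplit
  simp only [fval, friendsIn]
  push_cast [← hsplit]
  ring

lemma utilAvgEQ_eq (hi : i ∈ C) :
    utilAvgEQ G C i = (Fintype.card N + 1) * avgFriendDeg G C i - (#C - 1) := by
  have hD : insert i (friendsIn G C i) ⊆ C :=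
    insert_subset hi fun j hj => (mem_friendsIn.1 hj).1
  rw [utilAvgEQ, ← expect_eq_sum_div_card, avgFriendDeg, mul_expect,
    ← expect_const (insert_nonempty i (friendsIn G C i)) ((#C : ℚ) - 1), ← expect_sub_distrib]
  refine expect_congr rfl fun c hc => ?_
  rw [fval_eq (hD hc)]
  push_cast
  ring

lemma Blocks.avgFriendDeg_gap {Γ : CoalitionStructure N} (hC : Blocks (utilAvgEQ G) Γ C)
    (hi : i ∈ C) :
    (Fintype.card N + 1) * (avgFriendDeg G (Γ.part i) i - avgFriendDeg G C i)
      < #(Γ.part i) - #C := by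
  have h := hC.2 i hi
  rw [utilAvgEQ_eq (Γ.mem_part i), utilAvgEQ_eq hi] at h
  linarith

end Utility

section DomeGadget

variable {N : Type*} [DecidableEq N] {G : SimpleGraph N} {d k' : ℕ} {P X : Finset N}
  {top y z : N} {mid fringe : Fin d → N}

lemma mem_domeBase : y ∈ domeBase P top mid ↔ y ∈ P ∧ y ≠ top ∧ ∀ i, y ≠ mid i := by
  simp only [domeBase, mem_sdiff, mem_insert, mem_image, mem_univ, true_and, not_or, not_exists]
  grind

lemma domeBase_subset : domeBase P top mid ⊆ P := sdiff_subset

lemma top_notMem_domeBase : top ∉ domeBase P top mid := by simp [mem_domeBase]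

lemma mid_notMem_domeBase (i : Fin d) : mid i ∉ domeBase P top mid := by simp [mem_domeBase]

namespace IsDomeGadget

variable (hg : IsDomeGadget G d k' P top mid fringe)
include hg

lemma fringe_ne_top (i : Fin d) : fringe i ≠ top := (mem_domeBase.1 (hg.fringe_mem i)).2.1

lemma fringe_ne_mid (i j : Fin d) : fringe i ≠ mid j := (mem_domeBase.1 (hg.fringe_mem i)).2.2 j

lemma fringe_mem_P (i : Fin d) : fringe i ∈ P := domeBase_subset (hg.fringe_mem i)

lemma card_domeBase_add : #(domeBase P top mid) + d + 1 = k' := by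
  have hsub : insert top (univ.image mid) ⊆ P :=
    insert_subset hg.top_mem (image_subset_iff.2 fun i _ => hg.mid_mem i)
  have hcard : #(insert top (univ.image mid)) = d + 1 := by
    rw [card_insert_of_notMem, card_image_of_injective _ hg.mid_inj, card_univ, Fintype.card_fin]
    simpa [eq_comm] using hg.mid_ne_top
  rw [domeBase, card_sdiff_of_subset hsub, hcard, ← hg.card_eq]
  have := card_le_card hsub
  omega

lemma adj_of_mem_domeBase (hy : y ∈ domeBase P top mid) (hz : z ∈ P) (hadj : G.Adj y z) :
    z ∈ domeBase P top mid ∨ ∃ i, y = fringe i ∧ z = mid i := by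
  obtain ⟨hyP, hyt, hym⟩ := mem_domeBase.1 hy
  rcases (hg.adj_iff y hyP z hz).1 hadj with
    ⟨h, _⟩ | ⟨_, i, h⟩ | ⟨_, h, _⟩ | ⟨i, ⟨h, _⟩ | ⟨h, h'⟩⟩
  · exact absurd h hyt
  · exact absurd h (hym i)
  · exact Or.inl h
  · exact absurd h (hym i)
  · exact Or.inr ⟨i, h', h⟩

lemma adj_of_mid {i : Fin d} (hz : z ∈ P) (hadj : G.Adj (mid i) z) :
    z = top ∨ z = fringe i := by
  rcases (hg.adj_iff (mid i) (hg.mid_mem i) z hz).1 hadj with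
    ⟨h, _⟩ | ⟨h, _⟩ | ⟨h, _⟩ | ⟨j, ⟨h, h'⟩ | ⟨_, h⟩⟩
  · exact absurd h (hg.mid_ne_top i)
  · exact Or.inl h
  · exact absurd h (mid_notMem_domeBase i)
  · exact Or.inr (hg.mid_inj h ▸ h')
  · exact absurd h.symm (hg.fringe_ne_mid j i)

lemma adj_of_top (hz : z ∈ P) (hadj : G.Adj top z) : ∃ i, z = mid i := by
  rcases (hg.adj_iff top hg.top_mem z hz).1 hadj with
    ⟨_, h⟩ | ⟨_, i, h⟩ | ⟨h, _⟩ | ⟨i, ⟨h, _⟩ | ⟨_, h⟩⟩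
  · exact h
  · exact absurd h.symm (hg.mid_ne_top i)
  · exact absurd h top_notMem_domeBase
  · exact absurd h.symm (hg.mid_ne_top i)
  · exact absurd h.symm (hg.fringe_ne_top i)

lemma adj_of_mem_domeBase_of_mem_domeBase (hy : y ∈ domeBase P top mid)
    (hz : z ∈ domeBase P top mid) (hne : y ≠ z) : G.Adj y z :=
  (hg.adj_iff y (domeBase_subset hy) z (domeBase_subset hz)).2
    (Or.inr (Or.inr (Or.inl ⟨hy, hz, hne⟩)))

lemma adj_fringe_mid (i : Fin d) : G.Adj (fringe i) (mid i) :=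
  (hg.adj_iff _ (hg.fringe_mem_P i) _ (hg.mid_mem i)).2
    (Or.inr (Or.inr (Or.inr ⟨i, Or.inr ⟨rfl, rfl⟩⟩)))

lemma adj_top_mid (i : Fin d) : G.Adj top (mid i) :=
  (hg.adj_iff _ hg.top_mem _ (hg.mid_mem i)).2 (Or.inl ⟨rfl, i, rfl⟩)

lemma friendsIn_top (hX : X ⊆ P) : friendsIn G X top = univ.image mid ∩ X := by
  ext z
  simp only [mem_friendsIn, mem_inter, mem_image, mem_univ, true_and]
  constructor
  · rintro ⟨hzX, hadj⟩
    exact ⟨(hg.adj_of_top (hX hzX) hadj).imp fun i h => h.symm, hzX⟩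
  · rintro ⟨⟨i, rfl⟩, hzX⟩
    exact ⟨hzX, hg.adj_top_mid i⟩

lemma erase_domeBase_subset_friendsIn (hy : y ∈ domeBase P top mid) :
    (domeBase P top mid).erase y ⊆ friendsIn G P y := fun _ hx =>
  mem_friendsIn.2 ⟨domeBase_subset (mem_of_mem_erase hx),
    hg.adj_of_mem_domeBase_of_mem_domeBase hy (mem_of_mem_erase hx) (ne_of_mem_erase hx).symm⟩

lemma domeBase_subset_insert_friendsIn (hy : y ∈ domeBase P top mid) :
    domeBase P top mid ⊆ insert y (friendsIn G P y) := by
  rw [← insert_erase hy]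
  exact insert_subset_insert y (hg.erase_domeBase_subset_friendsIn hy)

lemma card_domeBase_le_card_friendsIn_fringe (i : Fin d) :
    #(domeBase P top mid) ≤ #(friendsIn G P (fringe i)) := by
  have hsub : insert (mid i) ((domeBase P top mid).erase (fringe i))
      ⊆ friendsIn G P (fringe i) :=
    insert_subset (mem_friendsIn.2 ⟨hg.mid_mem i, hg.adj_fringe_mid i⟩)
      (hg.erase_domeBase_subset_friendsIn (hg.fringe_mem i))
  have := card_le_card hsub
  rw [card_insert_of_notMem fun h => mid_notMem_domeBase i (mem_of_mem_erase h),
    card_erase_of_mem (hg.fringe_mem i)] at this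
  omega

lemma sum_card_friendsIn_domeBase_ge :
    (#(domeBase P top mid) : ℚ) * (#(domeBase P top mid) - 1) + d
      ≤ ∑ z ∈ domeBase P top mid, (#(friendsIn G P z) : ℚ) := by
  set B := domeBase P top mid
  have hpoint : ∀ z ∈ B, (#B - 1 : ℚ) + (if z ∈ univ.image fringe then 1 else 0)
      ≤ #(friendsIn G P z) := by
    intro z hz
    split_ifs with hzf
    · obtain ⟨i, -, rfl⟩ := mem_image.1 hzf
      have : (#B : ℚ) ≤ #(friendsIn G P (fringe i)) := by
        exact_mod_cast hg.card_domeBase_le_card_friendsIn_fringe i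
      linarith
    · have := card_le_card (hg.erase_domeBase_subset_friendsIn (G := G) hz)
      rw [card_erase_of_mem hz] at this
      have hB : 1 ≤ #B := card_pos.2 ⟨z, hz⟩
      have : ((#B - 1 : ℕ) : ℚ) ≤ #(friendsIn G P z) := by exact_mod_cast this
      push_cast [hB] at this
      linarith
  have hfringes : B.filter (· ∈ univ.image fringe) = univ.image fringe := by
    rw [filter_mem_eq_inter, inter_eq_right]
    exact image_subset_iff.2 fun i _ => hg.fringe_mem i
  calc (#B : ℚ) * (#B - 1) + d
      = ∑ z ∈ B, ((#B - 1 : ℚ) + (if z ∈ univ.image fringe then 1 else 0)) := by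
        rw [sum_add_distrib, sum_const, sum_boole, hfringes,
          card_image_of_injective _ hg.fringe_inj, card_univ, Fintype.card_fin, nsmul_eq_mul]
    _ ≤ _ := sum_le_sum hpoint

lemma le_avgFriendDeg_top : (3 * d / (d + 1) : ℚ) ≤ avgFriendDeg G P top := by
  have hmid : ∀ i ∈ univ, (2 : ℚ) ≤ #(friendsIn G P (mid i)) := fun i _ => by
    have hsub : {top, fringe i} ⊆ friendsIn G P (mid i) := insert_subset
      (mem_friendsIn.2 ⟨hg.top_mem, (hg.adj_top_mid i).symm⟩)
      (singleton_subset_iff.2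
        (mem_friendsIn.2 ⟨hg.fringe_mem_P i, (hg.adj_fringe_mid i).symm⟩))
    have := card_le_card hsub
    rw [card_pair (hg.fringe_ne_top i).symm] at this
    exact_mod_cast this
  have hfr : friendsIn G P top = univ.image mid := by
    rw [hg.friendsIn_top subset_rfl, inter_eq_left.2 (image_subset_iff.2 fun i _ => hg.mid_mem i)]
  have hdeg : #(univ.image mid) = d := by
    rw [card_image_of_injective _ hg.mid_inj, card_univ, Fintype.card_fin]
  apply le_avgFriendDeg
  rw [sum_insert self_notMem_friendsIn, card_insert_of_notMem self_notMem_friendsIn, hfr,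
    sum_image fun i _ j _ h => hg.mid_inj h, hdeg, Nat.cast_succ,
    div_mul_cancel₀ _ (by positivity)]
  have := sum_le_sum hmid
  rw [sum_const, card_univ, Fintype.card_fin, nsmul_eq_mul] at this
  linarith

lemma card_domeBase_inter_add_le (htop : top ∈ X) :
    #(domeBase P top mid ∩ X) + #(univ.filter fun j => fringe j ∈ X ∧ mid j ∈ X) + 1 ≤ #X := by
  set S := univ.filter fun j => fringe j ∈ X ∧ mid j ∈ X
  have hsub : insert top ((domeBase P top mid ∩ X) ∪ S.image mid) ⊆ X :=
    insert_subset htop (union_subset inter_subset_right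
      (image_subset_iff.2 fun j hj => (mem_filter.1 hj).2.2))
  have hdisj : Disjoint (domeBase P top mid ∩ X) (S.image mid) :=
    disjoint_left.2 fun z hz hzm => by
      obtain ⟨j, -, rfl⟩ := mem_image.1 hzm
      exact mid_notMem_domeBase j (mem_inter.1 hz).1
  have htop' : top ∉ (domeBase P top mid ∩ X) ∪ S.image mid := by
    simp only [mem_union, mem_inter, mem_image, not_or, not_exists, not_and]
    exact ⟨fun h => absurd h top_notMem_domeBase, fun j _ h => hg.mid_ne_top j h⟩
  have := card_le_card hsub
  rwa [card_insert_of_notMem htop', card_union_of_disjoint hdisj,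
    card_image_of_injective _ hg.mid_inj] at this

variable (hloc : ∀ y ∈ P, y ≠ top → ∀ z, G.Adj y z → z ∈ P)
include hloc

lemma friendsIn_mid_subset (i : Fin d) : friendsIn G X (mid i) ⊆ {top, fringe i} := by
  intro z hz
  have hadj := (mem_friendsIn.1 hz).2
  simpa using hg.adj_of_mid (hloc _ (hg.mid_mem i) (hg.mid_ne_top i) z hadj) hadj

lemma card_friendsIn_mid_le (i : Fin d) : #(friendsIn G X (mid i)) ≤ 2 :=
  (card_le_card (hg.friendsIn_mid_subset hloc i)).trans card_le_two

lemma friendsIn_domeBase_subset (hy : y ∈ domeBase P top mid) :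
    friendsIn G X y ⊆ (domeBase P top mid ∩ X).erase y
      ∪ (univ.filter fun j => fringe j = y ∧ mid j ∈ X).image mid := by
  intro z hz
  obtain ⟨hzX, hadj⟩ := mem_friendsIn.1 hz
  have hzP := hloc y (domeBase_subset hy) (mem_domeBase.1 hy).2.1 z hadj
  rcases hg.adj_of_mem_domeBase hy hzP hadj with hzB | ⟨i, rfl, rfl⟩
  · exact mem_union_left _ (mem_erase.2 ⟨(G.ne_of_adj hadj).symm, mem_inter.2 ⟨hzB, hzX⟩⟩)
  · exact mem_union_right _ (mem_image_of_mem _ (by simp [hzX]))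

lemma insert_friendsIn_of_ne_fringe (hy : y ∈ domeBase P top mid) (hyX : y ∈ X)
    (hyf : ∀ i, y ≠ fringe i) : insert y (friendsIn G X y) = domeBase P top mid ∩ X := by
  apply Subset.antisymm
  · refine insert_subset (mem_inter.2 ⟨hy, hyX⟩) fun z hz => ?_
    rcases mem_union.1 (hg.friendsIn_domeBase_subset hloc hy hz) with hz | hz
    · exact mem_of_mem_erase hz
    · obtain ⟨j, hj, -⟩ := mem_image.1 hz
      exact absurd (mem_filter.1 hj).2.1.symm (hyf j)
  · intro z hz
    obtain ⟨hzB, hzX⟩ := mem_inter.1 hz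
    rcases eq_or_ne z y with rfl | hzy
    · exact mem_insert_self _ _
    · exact mem_insert_of_mem
        (mem_friendsIn.2 ⟨hzX, hg.adj_of_mem_domeBase_of_mem_domeBase hy hzB hzy.symm⟩)

lemma insert_friendsIn_domeBase_subset (hy : y ∈ domeBase P top mid) :
    insert y (friendsIn G X y) ⊆ P.erase top := by
  have hB : domeBase P top mid ⊆ P.erase top := fun z hz =>
    mem_erase.2 ⟨(mem_domeBase.1 hz).2.1, domeBase_subset hz⟩
  refine insert_subset (hB hy) fun z hz => ?_
  rcases mem_union.1 (hg.friendsIn_domeBase_subset hloc hy hz) with hz | hz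
  · exact hB (mem_inter.1 (mem_of_mem_erase hz)).1
  · obtain ⟨j, -, rfl⟩ := mem_image.1 hz
    exact mem_erase.2 ⟨hg.mid_ne_top j, hg.mid_mem j⟩

lemma card_friendsIn_domeBase_le (hy : y ∈ domeBase P top mid) :
    #(friendsIn G X y) ≤ #(domeBase P top mid ∩ X) + 1 := by
  have hfib : #(univ.filter fun j => fringe j = y ∧ mid j ∈ X) ≤ 1 :=
    card_le_one.2 fun i hi j hj =>
      hg.fringe_inj ((mem_filter.1 hi).2.1.trans (mem_filter.1 hj).2.1.symm)
  calc #(friendsIn G X y)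
      ≤ #((domeBase P top mid ∩ X).erase y)
        + #((univ.filter fun j => fringe j = y ∧ mid j ∈ X).image mid) :=
        (card_le_card (hg.friendsIn_domeBase_subset hloc hy)).trans (card_union_le _ _)
    _ ≤ #(domeBase P top mid ∩ X) + 1 := add_le_add card_erase_le (card_image_le.trans hfib)

lemma card_friendsIn_le (hy : y ∈ P) (hyt : y ≠ top) :
    #(friendsIn G X y) ≤ #(domeBase P top mid ∩ X) + 2 := by
  by_cases hyB : y ∈ domeBase P top mid
  · linarith [hg.card_friendsIn_domeBase_le hloc (X := X) hyB]
  · obtain ⟨i, rfl⟩ : ∃ i, y = mid i := by simpa [mem_domeBase, hy, hyt] using hyB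
    linarith [hg.card_friendsIn_mid_le hloc (X := X) i]

lemma sum_card_friendsIn_domeBase_inter_le :
    ∑ z ∈ domeBase P top mid ∩ X, (#(friendsIn G X z) : ℚ)
      ≤ #(domeBase P top mid ∩ X) * (#(domeBase P top mid ∩ X) - 1)
        + #(univ.filter fun j => fringe j ∈ X ∧ mid j ∈ X) := by
  set A := domeBase P top mid ∩ X
  set S := univ.filter fun j => fringe j ∈ X ∧ mid j ∈ X
  have hpoint : ∀ z ∈ A,
      (#(friendsIn G X z) : ℚ) ≤ (#A - 1) + #(S.filter (fringe · = z)) := by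
    intro z hz
    have hfib : univ.filter (fun j => fringe j = z ∧ mid j ∈ X) = S.filter (fringe · = z) := by
      ext j
      simp only [S, mem_filter, mem_univ, true_and]
      constructor
      · rintro ⟨rfl, hj⟩
        exact ⟨⟨(mem_inter.1 hz).2, hj⟩, rfl⟩
      · rintro ⟨⟨-, hj⟩, h⟩
        exact ⟨h, hj⟩
    have h := (card_le_card (hg.friendsIn_domeBase_subset hloc (X := X) (mem_inter.1 hz).1)).trans
      (card_union_le _ _)
    rw [card_erase_of_mem hz, hfib] at h
    have hA : 1 ≤ #A := card_pos.2 ⟨z, hz⟩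
    have h' : (#(friendsIn G X z) : ℚ) ≤ ((#A - 1 : ℕ) : ℚ) + #(S.filter (fringe · = z)) := by
      exact_mod_cast h.trans (Nat.add_le_add_left card_image_le _)
    push_cast [hA] at h'
    exact h'
  have hfiber : #S = ∑ z ∈ A, #(S.filter (fringe · = z)) :=
    card_eq_sum_card_fiberwise fun j hj => mem_inter.2 ⟨hg.fringe_mem j, (mem_filter.1 hj).2.1⟩
  calc ∑ z ∈ A, (#(friendsIn G X z) : ℚ)
      ≤ ∑ z ∈ A, ((#A - 1 : ℚ) + #(S.filter (fringe · = z))) := sum_le_sum hpoint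
    _ = #A * (#A - 1) + #S := by
        rw [sum_add_distrib, sum_const, nsmul_eq_mul, hfiber]
        push_cast
        rfl

lemma le_avgFriendDeg_of_ne_fringe (hy : y ∈ domeBase P top mid) (hyf : ∀ i, y ≠ fringe i) :
    (#(domeBase P top mid) * (#(domeBase P top mid) - 1) + d : ℚ) / #(domeBase P top mid)
      ≤ avgFriendDeg G P y := by
  have hq : (0 : ℚ) < #(domeBase P top mid) := by exact_mod_cast card_pos.2 ⟨y, hy⟩
  apply le_avgFriendDeg
  rw [hg.insert_friendsIn_of_ne_fringe hloc hy (domeBase_subset hy) hyf,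
    inter_eq_left.2 domeBase_subset, div_mul_cancel₀ _ hq.ne']
  exact hg.sum_card_friendsIn_domeBase_ge

lemma avgFriendDeg_of_ne_fringe_le (hy : y ∈ domeBase P top mid) (hyX : y ∈ X)
    (hyf : ∀ i, y ≠ fringe i) :
    avgFriendDeg G X y
      ≤ (#(domeBase P top mid ∩ X) * (#(domeBase P top mid ∩ X) - 1)
          + #(univ.filter fun j => fringe j ∈ X ∧ mid j ∈ X) : ℚ) / #(domeBase P top mid ∩ X) := by
  rw [avgFriendDeg, expect_eq_sum_div_card, hg.insert_friendsIn_of_ne_fringe hloc hy hyX hyf]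
  gcongr
  exact hg.sum_card_friendsIn_domeBase_inter_le hloc

end IsDomeGadget

end DomeGadget

/-- The arithmetic behind `IsDomeGadget.notMem_of_ne_fringe`: `q` and `a` count the base players
in the gadget and in the coalition, `T` the fringe–mid pairs inside the coalition. -/
lemma sub_add_sub_le_mul_sub_div {x : ℚ} {q a d T : ℕ} (ha : 0 < a) (haq : a ≤ q)
    (hTa : T ≤ a) (hTd : T ≤ d) (hqx : q ≤ x) :
    (q - a : ℚ) + (d - T) ≤ x * ((q * (q - 1) + d) / q - (a * (a - 1) + T) / a) := by
  have ha' : (0 : ℚ) < a := by exact_mod_cast ha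
  have hq' : (0 : ℚ) < q := by exact_mod_cast ha.trans_le haq
  have hdiff : ((q * (q - 1) + d) / q - (a * (a - 1) + T) / a : ℚ)
      = (q - a) + d / q - T / a := by
    field_simp
    ring
  have hxq : 1 ≤ x / q := (one_le_div hq').2 hqx
  have hdq : (d : ℚ) ≤ x * (d / q) := by
    rw [mul_div_left_comm]
    exact le_mul_of_one_le_right (Nat.cast_nonneg d) hxq
  rw [hdiff]
  rcases haq.eq_or_lt with rfl | hlt
  · have hdT : (0 : ℚ) ≤ d - T := sub_nonneg.2 (Nat.cast_le.2 hTd)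
    calc (a - a : ℚ) + (d - T) = d - T := by ring
      _ ≤ (x / a) * (d - T) := le_mul_of_one_le_left hdT hxq
      _ = x * ((a - a) + d / a - T / a) := by ring
  · have hqa : (a + 1 : ℚ) ≤ q := by exact_mod_cast hlt
    have hTa1 : (T : ℚ) / a ≤ 1 := (div_le_one ha').2 (by exact_mod_cast hTa)
    have hTaT : (T : ℚ) / a ≤ T := div_le_self (Nat.cast_nonneg T) (by exact_mod_cast ha)
    have hx1 : (1 : ℚ) ≤ x := by linarith
    have : (q - a - T / a : ℚ) ≤ x * (q - a - T / a) :=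
      le_mul_of_one_le_left (by linarith) hx1
    nlinarith

section Blocking

variable {N : Type*} [Fintype N] [DecidableEq N] {G : SimpleGraph N}
  {Γ : CoalitionStructure N} {C : Finset N} {d k' M : ℕ} {P : Finset N} {top y : N}
  {mid fringe : Fin d → N}

namespace IsDomeGadget

variable (hg : IsDomeGadget G d k' P top mid fringe)
include hg

lemma le_card_univ : (k' : ℚ) ≤ Fintype.card N := by
  exact_mod_cast hg.card_eq ▸ card_le_univ P

variable (hpart : ∀ y ∈ P, Γ.part y = P) (hC : Blocks (utilAvgEQ G) Γ C)
include hpart hC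

lemma avgFriendDeg_gap (hy : y ∈ P) (hyC : y ∈ C) :
    (Fintype.card N + 1) * (avgFriendDeg G P y - avgFriendDeg G C y) < k' - #C := by
  have h := hC.avgFriendDeg_gap hyC
  rwa [hpart y hy, hg.card_eq] at h

lemma avgFriendDeg_sub_lt_one (hy : y ∈ P) (hyC : y ∈ C) :
    avgFriendDeg G P y - avgFriendDeg G C y < 1 := by
  have hgap := hg.avgFriendDeg_gap hpart hC hy hyC
  have hk' := hg.le_card_univ
  have hC1 : (1 : ℚ) ≤ #C := by exact_mod_cast card_pos.2 ⟨y, hyC⟩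
  by_contra! h
  nlinarith

variable (hloc : ∀ y ∈ P, y ≠ top → ∀ z, G.Adj y z → z ∈ P) (htop : top ∈ C)
include hloc htop

lemma notMem_of_ne_fringe (hy : y ∈ domeBase P top mid) (hyf : ∀ i, y ≠ fringe i) :
    y ∉ C := by
  intro hyC
  set S := univ.filter fun j => fringe j ∈ C ∧ mid j ∈ C
  have ha : 0 < #(domeBase P top mid ∩ C) := card_pos.2 ⟨y, mem_inter.2 ⟨hy, hyC⟩⟩
  have hTa : #S ≤ #(domeBase P top mid ∩ C) := by
    rw [← card_image_of_injective S hg.fringe_inj]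
    exact card_le_card (image_subset_iff.2 fun j hj =>
      mem_inter.2 ⟨hg.fringe_mem j, (mem_filter.1 hj).2.1⟩)
  have hTd : #S ≤ d := (card_filter_le _ _).trans (by simp)
  have hq : (#(domeBase P top mid) + d + 1 : ℚ) = k' := by
    exact_mod_cast hg.card_domeBase_add
  have hCcard : (#(domeBase P top mid ∩ C) + #S + 1 : ℚ) ≤ #C := by
    exact_mod_cast hg.card_domeBase_inter_add_le htop
  have hk' := hg.le_card_univ
  have hbound := sub_add_sub_le_mul_sub_div (x := Fintype.card N + 1) ha
    (card_le_card inter_subset_left) hTa hTd (by linarith)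
  have hgap := hg.avgFriendDeg_gap hpart hC (domeBase_subset hy) hyC
  have hmono := mul_le_mul_of_nonneg_left
    (sub_le_sub (hg.le_avgFriendDeg_of_ne_fringe hloc hy hyf)
      (hg.avgFriendDeg_of_ne_fringe_le hloc hy hyC hyf))
    (by positivity : (0 : ℚ) ≤ Fintype.card N + 1)
  linarith

lemma fringe_notMem (hk' : 2 * d + 7 ≤ k') (j : Fin d) : fringe j ∉ C := by
  intro hjC
  set q := #(domeBase P top mid)
  have hq : q + d + 1 = k' := hg.card_domeBase_add
  have hBC : #(domeBase P top mid ∩ C) ≤ d := by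
    refine (card_le_card fun z hz => ?_).trans
      (card_image_le.trans (card_univ.trans (Fintype.card_fin d)).le : #(univ.image fringe) ≤ d)
    by_contra hzf
    exact hg.notMem_of_ne_fringe hpart hC hloc htop (mem_inter.1 hz).1
      (fun i hi => hzf (hi ▸ mem_image_of_mem _ (mem_univ i))) (mem_inter.1 hz).2
  have hP : (q - 3 : ℚ) ≤ avgFriendDeg G P (fringe j) := by
    apply le_avgFriendDeg
    have hD := hg.card_friendsIn_domeBase_le hloc (X := P) (hg.fringe_mem j)
    rw [inter_eq_left.2 domeBase_subset] at hD
    have hD' : (#(insert (fringe j) (friendsIn G P (fringe j))) : ℚ) ≤ q + 2 := by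
      exact_mod_cast (card_insert_le _ _).trans (by omega)
    have hsum := hg.sum_card_friendsIn_domeBase_ge.trans (sum_le_sum_of_subset_of_nonneg
      (hg.domeBase_subset_insert_friendsIn (hg.fringe_mem j)) fun _ _ _ => Nat.cast_nonneg _)
    have hq3 : (3 : ℚ) ≤ q := by exact_mod_cast (by omega : 3 ≤ q)
    nlinarith
  have hC' : avgFriendDeg G C (fringe j) ≤ d + 2 := by
    refine avgFriendDeg_le fun c hc => ?_
    obtain ⟨hct, hcP⟩ :=
      mem_erase.1 (hg.insert_friendsIn_domeBase_subset hloc (hg.fringe_mem j) hc)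
    exact_mod_cast (hg.card_friendsIn_le hloc (X := C) hcP hct).trans (by omega)
  have hqd : (d + 6 : ℚ) ≤ q := by exact_mod_cast (by omega : d + 6 ≤ q)
  linarith [hg.avgFriendDeg_sub_lt_one hpart hC (hg.fringe_mem_P j) hjC]

lemma mid_notMem (hk' : 2 * d + 7 ≤ k') (hM : #(friendsIn G C top) ≤ M)
    (hMk' : 3 * M + d + 7 ≤ k') (i : Fin d) : mid i ∉ C := by
  intro hiC
  set q := #(domeBase P top mid)
  have hq : q + d + 1 = k' := hg.card_domeBase_add
  have hP : (q / 3 : ℚ) ≤ avgFriendDeg G P (mid i) := by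
    apply le_avgFriendDeg
    have hD : (#(insert (mid i) (friendsIn G P (mid i))) : ℚ) ≤ 3 := by
      exact_mod_cast (card_insert_le _ _).trans
        (Nat.succ_le_succ (hg.card_friendsIn_mid_le hloc (X := P) i))
    have hfr : fringe i ∈ insert (mid i) (friendsIn G P (mid i)) :=
      mem_insert_of_mem (mem_friendsIn.2 ⟨hg.fringe_mem_P i, (hg.adj_fringe_mid i).symm⟩)
    have hsum := single_le_sum (f := fun c => (#(friendsIn G P c) : ℚ))
      (fun _ _ => Nat.cast_nonneg _) hfr
    have hqfr : (q : ℚ) ≤ #(friendsIn G P (fringe i)) := by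
      exact_mod_cast hg.card_domeBase_le_card_friendsIn_fringe i
    have : (0 : ℚ) ≤ q := Nat.cast_nonneg q
    nlinarith
  have hsub : friendsIn G C (mid i) ⊆ {top} := fun z hz => by
    rcases mem_insert.1 (hg.friendsIn_mid_subset hloc i hz) with rfl | hz'
    · exact mem_singleton_self z
    · exact absurd (mem_singleton.1 hz' ▸ (mem_friendsIn.1 hz).1)
        (hg.fringe_notMem hpart hC hloc htop hk' i)
  have hC' : avgFriendDeg G C (mid i) ≤ M + 1 := by
    refine avgFriendDeg_le fun c hc => ?_
    rcases mem_insert.1 hc with rfl | hc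
    · have : #(friendsIn G C (mid i)) ≤ 1 := (card_le_card hsub).trans (card_singleton top).le
      exact_mod_cast this.trans (Nat.le_add_left 1 M)
    · rw [mem_singleton.1 (hsub hc)]
      exact_mod_cast hM.trans (Nat.le_succ M)
  have hqM : (3 * M + 6 : ℚ) ≤ q := by exact_mod_cast (by omega : 3 * M + 6 ≤ q)
  linarith [hg.avgFriendDeg_sub_lt_one hpart hC (hg.mid_mem i) hiC]

end IsDomeGadget

end Blocking

lemma two_mul_add_fifteen_le_avgK' {k : ℕ} (hk : 4 ≤ k) : 2 * k + 15 ≤ avgK' k := by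
  obtain ⟨m, rfl⟩ : ∃ m, k = m + 4 := ⟨k - 4, by omega⟩
  have h : m + 6 ≤ (m + 4).choose 2 := by
    rw [Nat.choose_two_right, Nat.le_div_iff_mul_le two_pos]
    show (m + 6) * 2 ≤ (m + 4) * (m + 3)
    nlinarith
  unfold avgK'
  omega

lemma div_add_one_div_sq_le {k t s : ℕ} (hk : 4 ≤ k) (hst : s ≤ t) (hsk : s + 2 ≤ k) :
    ((2 * t + s) / (t + 1) : ℚ) + 1 / k ^ 2 ≤ 3 * (k - 1) / k := by
  have hk' : (4 : ℚ) ≤ k := by exact_mod_cast hk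
  have hst' : (s : ℚ) ≤ t := by exact_mod_cast hst
  have hsk' : (s + 2 : ℚ) ≤ k := by exact_mod_cast hsk
  have hs : (0 : ℚ) ≤ s := Nat.cast_nonneg s
  rw [div_add_div _ _ (by positivity) (by positivity),
    div_le_div_iff₀ (by positivity) (by positivity)]
  nlinarith [mul_le_mul_of_nonneg_right hst' (by nlinarith : (0 : ℚ) ≤ k ^ 2 - 3 * k - 1),
    mul_le_mul_of_nonneg_left hsk' (by positivity : (0 : ℚ) ≤ 3 * k)]

section Reduction

variable {V N : Type*} [DecidableEq N] {H : SimpleGraph V} {k : ℕ} {G : SimpleGraph N}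
  {Pv : V → Finset N} {Pe : Sym2 V → Finset N} {Pve : V → Sym2 V → Finset N}
  {vp : V → N} {ep : Sym2 V → N} {bp : V → Sym2 V → N} {x z : N} {a v w : V} {e f : Sym2 V}

namespace AvgEQReduction

variable (R : AvgEQReduction H k G Pv Pe Pve vp ep bp)
include R

lemma card_Pv (v : V) : #(Pv v) = avgK' k :=
  let ⟨_, _, hg⟩ := R.dome_v v; hg.card_eq

lemma card_Pe (he : e ∈ H.edgeSet) : #(Pe e) = avgK' k :=
  let ⟨_, _, hg⟩ := R.dome_e e he; hg.card_eq

lemma vp_mem (v : V) : vp v ∈ Pv v :=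
  let ⟨_, _, hg⟩ := R.dome_v v; hg.top_mem

lemma ep_mem (he : e ∈ H.edgeSet) : ep e ∈ Pe e :=
  let ⟨_, _, hg⟩ := R.dome_e e he; hg.top_mem

lemma bp_mem (he : e ∈ H.edgeSet) (hve : v ∈ e) : bp v e ∈ Pve v e :=
  let ⟨_, _, hg⟩ := R.dome_ve v e he hve; hg.top_mem

lemma eq_of_mem_Pv (ha : x ∈ Pv a) (hv : x ∈ Pv v) : a = v := by
  by_contra hne
  exact disjoint_left.1 (R.disj_vv a v hne) ha hv

lemma notMem_Pe_of_mem_Pv (he : e ∈ H.edgeSet) (hv : x ∈ Pv v) : x ∉ Pe e :=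
  disjoint_left.1 (R.disj_v_e v e he) hv

lemma notMem_Pve_of_mem_Pv (hf : f ∈ H.edgeSet) (hwf : w ∈ f) (hv : x ∈ Pv v) : x ∉ Pve w f :=
  disjoint_left.1 (R.disj_v_b v w f hf hwf) hv

lemma notMem_Pve_of_mem_Pe (he : e ∈ H.edgeSet) (hf : f ∈ H.edgeSet) (hwf : w ∈ f)
    (hx : x ∈ Pe e) : x ∉ Pve w f :=
  disjoint_left.1 (R.disj_e_b e he w f hf hwf) hx

lemma eq_of_mem_Pve (he : e ∈ H.edgeSet) (hve : v ∈ e) (hf : f ∈ H.edgeSet) (hwf : w ∈ f)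
    (hv : x ∈ Pve v e) (hw : x ∈ Pve w f) : v = w ∧ e = f := by
  by_contra hne
  exact disjoint_left.1 (R.disj_bb v e he hve w f hf hwf fun h => hne (Prod.mk.inj h)) hv hw

lemma mem_Pv_of_adj (v : V) : ∀ y ∈ Pv v, y ≠ vp v → ∀ z, G.Adj y z → z ∈ Pv v := by
  intro y hy hyne z hadj
  rcases R.adj_cases y z hadj with ⟨a, h1, h2⟩ | ⟨f, hf, h1, -⟩ | ⟨a, f, hf, haf, h1, -⟩ |
    ⟨a, f, hf, haf, ⟨h1, -⟩ | ⟨h1, h2⟩⟩ | ⟨a, f, hf, haf, ⟨h1, -⟩ | ⟨-, h2⟩⟩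
  · rwa [R.eq_of_mem_Pv h1 hy] at h2
  · exact absurd h1 (R.notMem_Pe_of_mem_Pv hf hy)
  · exact absurd h1 (R.notMem_Pve_of_mem_Pv hf haf hy)
  · exact absurd (h1 ▸ R.bp_mem hf haf) (R.notMem_Pve_of_mem_Pv hf haf hy)
  · exact absurd (R.eq_of_mem_Pv (h2 ▸ R.vp_mem a) hy ▸ h2) hyne
  · exact absurd (h1 ▸ R.bp_mem hf haf) (R.notMem_Pve_of_mem_Pv hf haf hy)
  · exact absurd (h2 ▸ R.ep_mem hf) (R.notMem_Pe_of_mem_Pv hf hy)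

lemma mem_Pve_of_adj (he : e ∈ H.edgeSet) (hve : v ∈ e) :
    ∀ y ∈ Pve v e, y ≠ bp v e → ∀ z, G.Adj y z → z ∈ Pve v e := by
  intro y hy hyne z hadj
  rcases R.adj_cases y z hadj with ⟨a, h1, -⟩ | ⟨f, hf, h1, -⟩ | ⟨a, f, hf, haf, h1, h2⟩ |
    ⟨a, f, hf, haf, ⟨h1, -⟩ | ⟨-, h2⟩⟩ | ⟨a, f, hf, haf, ⟨h1, -⟩ | ⟨-, h2⟩⟩
  · exact absurd hy (R.notMem_Pve_of_mem_Pv he hve h1)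
  · exact absurd hy (R.notMem_Pve_of_mem_Pe hf he hve h1)
  · obtain ⟨rfl, rfl⟩ := R.eq_of_mem_Pve hf haf he hve h1 hy
    exact h2
  · obtain ⟨rfl, rfl⟩ := R.eq_of_mem_Pve hf haf he hve (h1 ▸ R.bp_mem hf haf) hy
    exact absurd h1 hyne
  · exact absurd hy (R.notMem_Pve_of_mem_Pv he hve (h2 ▸ R.vp_mem a))
  · obtain ⟨rfl, rfl⟩ := R.eq_of_mem_Pve hf haf he hve (h1 ▸ R.bp_mem hf haf) hy
    exact absurd h1 hyne
  · exact absurd hy (R.notMem_Pve_of_mem_Pe hf he hve (h2 ▸ R.ep_mem hf))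

lemma adj_vp (hadj : G.Adj (vp v) z) : z ∈ Pv v ∨ ∃ e ∈ H.edgeSet, v ∈ e ∧ z = bp v e := by
  have hv := R.vp_mem v
  rcases R.adj_cases (vp v) z hadj with ⟨a, h1, h2⟩ | ⟨f, hf, h1, -⟩ | ⟨a, f, hf, haf, h1, -⟩ |
    ⟨a, f, hf, haf, ⟨h1, -⟩ | ⟨h1, h2⟩⟩ | ⟨a, f, hf, haf, ⟨h1, -⟩ | ⟨-, h1⟩⟩
  · exact Or.inl (R.eq_of_mem_Pv h1 hv ▸ h2)
  · exact absurd h1 (R.notMem_Pe_of_mem_Pv hf hv)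
  · exact absurd h1 (R.notMem_Pve_of_mem_Pv hf haf hv)
  · exact absurd (h1 ▸ R.bp_mem hf haf) (R.notMem_Pve_of_mem_Pv hf haf hv)
  · obtain rfl := R.eq_of_mem_Pv (h2 ▸ R.vp_mem a) hv
    exact Or.inr ⟨f, hf, haf, h1⟩
  · exact absurd (h1 ▸ R.bp_mem hf haf) (R.notMem_Pve_of_mem_Pv hf haf hv)
  · exact absurd (h1 ▸ R.ep_mem hf) (R.notMem_Pe_of_mem_Pv hf hv)

lemma adj_bp (he : e ∈ H.edgeSet) (hve : v ∈ e) (hadj : G.Adj (bp v e) z) :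
    z ∈ Pve v e ∨ z = vp v ∨ z = ep e := by
  have hb := R.bp_mem he hve
  rcases R.adj_cases (bp v e) z hadj with ⟨a, h1, -⟩ | ⟨f, hf, h1, -⟩ | ⟨a, f, hf, haf, h1, h2⟩ |
    ⟨a, f, hf, haf, ⟨h1, h2⟩ | ⟨-, h2⟩⟩ | ⟨a, f, hf, haf, ⟨h1, h2⟩ | ⟨-, h2⟩⟩
  · exact absurd hb (R.notMem_Pve_of_mem_Pv he hve h1)
  · exact absurd hb (R.notMem_Pve_of_mem_Pe hf he hve h1)
  · obtain ⟨rfl, rfl⟩ := R.eq_of_mem_Pve hf haf he hve h1 hb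
    exact Or.inl h2
  · obtain ⟨rfl, rfl⟩ := R.eq_of_mem_Pve hf haf he hve (h1 ▸ R.bp_mem hf haf) hb
    exact Or.inr (Or.inl h2)
  · exact absurd hb (R.notMem_Pve_of_mem_Pv he hve (h2 ▸ R.vp_mem a))
  · obtain ⟨rfl, rfl⟩ := R.eq_of_mem_Pve hf haf he hve (h1 ▸ R.bp_mem hf haf) hb
    exact Or.inr (Or.inr h2)
  · exact absurd hb (R.notMem_Pve_of_mem_Pe hf he hve (h2 ▸ R.ep_mem hf))

end AvgEQReduction

end Reduction

section ReductionBlocking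

variable {V N : Type*} [Fintype N] [DecidableEq N] {H : SimpleGraph V} {k : ℕ}
  {G : SimpleGraph N} {Pv : V → Finset N} {Pe : Sym2 V → Finset N} {Pve : V → Sym2 V → Finset N}
  {vp : V → N} {ep : Sym2 V → N} {bp : V → Sym2 V → N} {Γ : CoalitionStructure N} {C : Finset N}
  {v : V} {e : Sym2 V}

namespace AvgEQReduction

variable (R : AvgEQReduction H k G Pv Pe Pve vp ep bp)
include R

lemma avgK'_mul_le_card [Fintype V] (hsize : k ^ 2 ≤ Fintype.card V + #H.edgeFinset) :
    avgK' k * k ^ 2 ≤ Fintype.card N := by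
  have hPv : #(univ.biUnion Pv) = Fintype.card V * avgK' k := by
    rw [card_biUnion fun a _ b _ h => R.disj_vv a b h, sum_congr rfl fun w _ => R.card_Pv w,
      sum_const, card_univ, smul_eq_mul]
  have hPe : #(H.edgeFinset.biUnion Pe) = #H.edgeFinset * avgK' k := by
    rw [card_biUnion fun a ha b hb h => R.disj_ee a (SimpleGraph.mem_edgeFinset.1 ha) b
        (SimpleGraph.mem_edgeFinset.1 hb) h,
      sum_congr rfl fun f hf => R.card_Pe (SimpleGraph.mem_edgeFinset.1 hf), sum_const, smul_eq_mul]
  have hdisj : Disjoint (univ.biUnion Pv) (H.edgeFinset.biUnion Pe) := by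
    simp only [disjoint_biUnion_left, disjoint_biUnion_right]
    exact fun f hf a _ => R.disj_v_e a f (SimpleGraph.mem_edgeFinset.1 hf)
  calc avgK' k * k ^ 2 ≤ avgK' k * (Fintype.card V + #H.edgeFinset) :=
        Nat.mul_le_mul_left _ hsize
    _ = #(univ.biUnion Pv ∪ H.edgeFinset.biUnion Pe) := by
        rw [card_union_of_disjoint hdisj, hPv, hPe]
        ring
    _ ≤ Fintype.card N := card_le_univ _

variable (hΓ : IsAvgGamma H Pv Pe Pve Γ) (hC : Blocks (utilAvgEQ G) Γ C) (hk : 4 ≤ k)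
include hΓ hC hk

lemma card_friendsIn_bp_le (he : e ∈ H.edgeSet) (hve : v ∈ e) (hb : bp v e ∈ C) :
    #(friendsIn G C (bp v e)) ≤ 1 + if ep e ∈ C then 1 else 0 := by
  obtain ⟨mid, fringe, hg⟩ := R.dome_ve v e he hve
  have hk' := two_mul_add_fifteen_le_avgK' hk
  have hsub : friendsIn G C (bp v e) ⊆ insert (vp v) (insert (ep e) (univ.image mid)) := by
    intro z hz
    obtain ⟨-, hadj⟩ := mem_friendsIn.1 hz
    rcases R.adj_bp he hve hadj with hzP | rfl | rfl
    · obtain ⟨i, rfl⟩ := hg.adj_of_top hzP hadj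
      exact mem_insert_of_mem (mem_insert_of_mem (mem_image_of_mem _ (mem_univ i)))
    · exact mem_insert_self _ _
    · exact mem_insert_of_mem (mem_insert_self _ _)
  have hfour : #(friendsIn G C (bp v e)) ≤ 4 := (card_le_card hsub).trans <|
    (card_insert_le _ _).trans <| Nat.succ_le_succ <| (card_insert_le _ _).trans <|
      Nat.succ_le_succ <| card_image_le.trans (by simp)
  have hmid : ∀ i, mid i ∉ C :=
    hg.mid_notMem (hΓ.2.2 v e he hve) hC (R.mem_Pve_of_adj he hve) hb (by omega) hfour (by omega)
  have hsub' : friendsIn G C (bp v e) ⊆ insert (vp v) (({ep e} : Finset N).filter (· ∈ C)) := by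
    intro z hz
    have hzC := (mem_friendsIn.1 hz).1
    rcases mem_insert.1 (hsub hz) with rfl | hz'
    · exact mem_insert_self _ _
    rcases mem_insert.1 hz' with rfl | hz'
    · exact mem_insert_of_mem (mem_filter.2 ⟨mem_singleton_self _, hzC⟩)
    · obtain ⟨i, -, rfl⟩ := mem_image.1 hz'
      exact absurd hzC (hmid i)
  refine (card_le_card hsub').trans ((card_insert_le _ _).trans ?_)
  rw [filter_singleton]
  split_ifs <;> simp

variable [Fintype V] [DecidableEq V]

lemma card_friendsIn_of_adj_vp_le (hv : vp v ∈ C) {c : N} (hc : c ∈ friendsIn G C (vp v)) :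
    #(friendsIn G C c) ≤ 1 +
      if c ∈ (H.edgeFinset.filter fun e => v ∈ e ∧ ep e ∈ C).image (bp v) then 1 else 0 := by
  obtain ⟨hcC, hadj⟩ := mem_friendsIn.1 hc
  rcases R.adj_vp hadj with hcP | ⟨e, he, hve, rfl⟩
  · obtain ⟨mid, fringe, hg⟩ := R.dome_v v
    obtain ⟨i, rfl⟩ := hg.adj_of_top hcP hadj
    have hfr : fringe i ∉ C := hg.fringe_notMem (hΓ.1 v) hC (R.mem_Pv_of_adj v) hv
      (by have := two_mul_add_fifteen_le_avgK' hk; omega) i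
    have hsub : friendsIn G C (mid i) ⊆ {vp v} := fun z hz => by
      rcases mem_insert.1 (hg.friendsIn_mid_subset (R.mem_Pv_of_adj v) i hz) with rfl | hz'
      · exact mem_singleton_self _
      · exact absurd (mem_singleton.1 hz' ▸ (mem_friendsIn.1 hz).1) hfr
    exact (card_le_card hsub).trans (by simp)
  · refine (R.card_friendsIn_bp_le hΓ hC hk he hve hcC).trans (Nat.add_le_add_left ?_ 1)
    by_cases h : ep e ∈ C
    · rw [if_pos h, if_pos (mem_image_of_mem _ (mem_filter.2
        ⟨SimpleGraph.mem_edgeFinset.2 he, hve, h⟩))]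
    · rw [if_neg h]
      exact Nat.zero_le _

lemma avgFriendDeg_vp_add_le (hv : vp v ∈ C)
    (hfew : #(H.edgeFinset.filter fun e => v ∈ e ∧ ep e ∈ C) + 2 ≤ k) :
    avgFriendDeg G C (vp v) + 1 / k ^ 2 ≤ 3 * (k - 1) / k := by
  set S := (H.edgeFinset.filter fun e => v ∈ e ∧ ep e ∈ C).image (bp v)
  set F := friendsIn G C (vp v)
  have hsum : ∑ c ∈ F, (#(friendsIn G C c) : ℚ) ≤ #F + #(F.filter (· ∈ S)) := by
    calc ∑ c ∈ F, (#(friendsIn G C c) : ℚ)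
        ≤ ∑ c ∈ F, (1 + if c ∈ S then 1 else 0 : ℚ) := sum_le_sum fun c hc => by
          exact_mod_cast R.card_friendsIn_of_adj_vp_le hΓ hC hk hv hc
      _ = #F + #(F.filter (· ∈ S)) := by
          rw [sum_add_distrib, sum_boole, sum_const, nsmul_one]
  have hs : #(F.filter (· ∈ S)) + 2 ≤ k := by
    refine le_trans ?_ hfew
    gcongr
    exact (card_le_card fun _ hx => (mem_filter.1 hx).2).trans card_image_le
  have hmono : avgFriendDeg G C (vp v) ≤ (2 * #F + #(F.filter (· ∈ S)) : ℚ) / (#F + 1) := by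
    rw [avgFriendDeg_eq]
    exact div_le_div_of_nonneg_right (by linarith) (by positivity)
  linarith [div_add_one_div_sq_le hk (card_filter_le F (· ∈ S)) hs]

end AvgEQReduction

end ReductionBlocking

/-- In the avg-EQ reduction instance, if a coalition `C` blocks `Γ` and a vertex
player `vp v` belongs to `C`, then at least `k − 1` edges of `H` incident to `v`
have their edge player in `C`. -/
theorem avgEQ_vertex_player_degree {V N : Type*} [Fintype V] [DecidableEq V]
    [Fintype N] [DecidableEq N]
    (H : SimpleGraph V) (k : ℕ) (hk : 4 ≤ k)
    (hsize : k ^ 2 ≤ Fintype.card V + H.edgeFinset.card)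
    (G : SimpleGraph N) (Pv : V → Finset N) (Pe : Sym2 V → Finset N)
    (Pve : V → Sym2 V → Finset N)
    (vp : V → N) (ep : Sym2 V → N) (bp : V → Sym2 V → N)
    (R : AvgEQReduction H k G Pv Pe Pve vp ep bp)
    (Γ : CoalitionStructure N) (hΓ : IsAvgGamma H Pv Pe Pve Γ)
    (C : Finset N) (hC : Blocks (utilAvgEQ G) Γ C)
    (v : V) (hv : vp v ∈ C) :
    k - 1 ≤ (H.edgeFinset.filter (fun e => v ∈ e ∧ ep e ∈ C)).card := by
  by_contra hlt
  obtain ⟨mid, fringe, hg⟩ := R.dome_v v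
  have hP : (3 * (k - 1) / k : ℚ) ≤ avgFriendDeg G (Pv v) (vp v) := by
    simpa [Nat.cast_sub (by omega : 1 ≤ k)] using hg.le_avgFriendDeg_top
  have hCv := R.avgFriendDeg_vp_add_le hΓ hC hk hv (by omega)
  have hgap := hg.avgFriendDeg_gap (hΓ.1 v) hC hg.top_mem hv
  have hn : (avgK' k * k ^ 2 : ℚ) ≤ Fintype.card N := by
    exact_mod_cast R.avgK'_mul_le_card hsize
  have hbig : (avgK' k : ℚ) ≤ (Fintype.card N + 1) * (1 / k ^ 2) := by
    rw [mul_one_div, le_div_iff₀ (by positivity)]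
    linarith
  have hdrop := mul_le_mul_of_nonneg_left
    (by linarith : (1 / k ^ 2 : ℚ) ≤ avgFriendDeg G (Pv v) (vp v) - avgFriendDeg G C (vp v))
    (by positivity : (0 : ℚ) ≤ Fintype.card N + 1)
  have hC1 : (1 : ℚ) ≤ #C := by exact_mod_cast card_pos.2 ⟨vp v, hv⟩
  linarith
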